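/- arXiv:2201.06385 — 2 statements merged into one kernel-verified Lean document; each statement's English description precedes it below -/
import Mathlib

section
/- For a connected weighted graph G and any cut C ⊆ E (a set of links whose removal disconnects G), the sum of relative resistances over the cut satisfies Σ_{(i,j)∈C} c_ij·ω_ij ≥ 1. -/
open Matrix

variable {V : Type*}

/- The weighted Laplacian matrix of a weighted graph `(V, G, c)`:
`Q i i = ∑_{k ∼ i} c i k`, `Q i j = -c i j` for links `i ∼ j`, and `0` otherwise. -/
open Classical in
noncomputable def lapMatrix [Fintype V] (G : SimpleGraph V) (c : V → V → ℝ) :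
    Matrix V V ℝ :=
  Matrix.of fun i j =>
    if i = j then ∑ k, if G.Adj i k then c i k else 0
    else if G.Adj i j then -c i j else 0

/- The four Penrose equations characterizing the Moore–Penrose pseudoinverse. -/
def IsMoorePenroseInv [Fintype V] (Q Qd : Matrix V V ℝ) : Prop :=
  Q * Qd * Q = Q ∧ Qd * Q * Qd = Qd ∧ (Q * Qd)ᵀ = Q * Qd ∧ (Qd * Q)ᵀ = Qd * Q

/- The effective resistance `ω i j = (e_i - e_j)ᵀ Q† (e_i - e_j)`, computed from a
pseudoinverse `Qd` of the Laplacian. -/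
open Classical in
noncomputable def effRes [Fintype V] (Qd : Matrix V V ℝ) (i j : V) : ℝ :=
  (Pi.single i 1 - Pi.single j 1) ⬝ᵥ Qd *ᵥ (Pi.single i 1 - Pi.single j 1)

lemma effRes_symm [Fintype V] (Qd : Matrix V V ℝ) (i j : V) :
    effRes Qd i j = effRes Qd j i := by
  unfold effRes
  simp [Matrix.mulVec_sub]
  ring

/- The relative resistance `c i j * ω i j` as a function on unordered links. -/
noncomputable def relResEdge [Fintype V] (c : V → V → ℝ) (hc : ∀ i j, c i j = c j i)
    (Qd : Matrix V V ℝ) : Sym2 V → ℝ :=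
  Sym2.lift ⟨fun i j => c i j * effRes Qd i j, fun a b => by
    show c a b * effRes Qd a b = c b a * effRes Qd b a
    rw [hc a b, effRes_symm]⟩

/-! Let `S` be the vertex set of a component of `G` with the links of `C` removed, `f` its
indicator vector and `κ` the total weight of the links leaving `S`, all of which lie in `C`.
Then `Q f = ∑ c i j • (e i - e j)` over those links and `κ = fᵀ Q f = (Q f)ᵀ Q† (Q f)`.
As `Q†` is positive semidefinite, the quadratic form `x ↦ xᵀ Q† x` is convex, whence
`κ ≤ κ * ∑ c i j * ω i j` over the links leaving `S`, and `κ > 0` because `G` is connected. -/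

namespace Matrix

variable {n ι R : Type*} [Fintype n] [CommRing R] [LinearOrder R] [IsStrictOrderedRing R]

theorem add_dotProduct_mulVec_le {A : Matrix n n R} (hA : ∀ x, 0 ≤ x ⬝ᵥ A *ᵥ x) (x y : n → R) :
    x ⬝ᵥ A *ᵥ y + y ⬝ᵥ A *ᵥ x ≤ x ⬝ᵥ A *ᵥ x + y ⬝ᵥ A *ᵥ y := by
  have h := hA (x - y)
  simp only [mulVec_sub, sub_dotProduct, dotProduct_sub] at h
  linarith

theorem sum_smul_dotProduct_mulVec_le {A : Matrix n n R} (hA : ∀ x, 0 ≤ x ⬝ᵥ A *ᵥ x)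
    (s : Finset ι) {w : ι → R} (hw : ∀ i ∈ s, 0 ≤ w i) (u : ι → n → R) :
    (∑ i ∈ s, w i • u i) ⬝ᵥ A *ᵥ (∑ i ∈ s, w i • u i) ≤
      (∑ i ∈ s, w i) * ∑ i ∈ s, w i * (u i ⬝ᵥ A *ᵥ u i) := by
  have hexpand : (∑ i ∈ s, w i • u i) ⬝ᵥ A *ᵥ (∑ i ∈ s, w i • u i) =
      ∑ i ∈ s, ∑ j ∈ s, w i * w j * (u i ⬝ᵥ A *ᵥ u j) := by
    simp only [mulVec_sum, sum_dotProduct, dotProduct_sum, mulVec_smul, smul_dotProduct,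
      dotProduct_smul, smul_eq_mul, Finset.mul_sum]
    rw [Finset.sum_comm]
    exact Finset.sum_congr rfl fun i _ => Finset.sum_congr rfl fun j _ => by ring
  have hswap : ∀ F : ι → ι → R, ∑ i ∈ s, ∑ j ∈ s, w i * w j * F j i =
      ∑ i ∈ s, ∑ j ∈ s, w i * w j * F i j := fun F => by
    rw [Finset.sum_comm]
    exact Finset.sum_congr rfl fun i _ => Finset.sum_congr rfl fun j _ => by ring
  have hpair := Finset.sum_le_sum fun i hi => Finset.sum_le_sum fun j hj =>
    mul_le_mul_of_nonneg_left (add_dotProduct_mulVec_le hA (u i) (u j))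
      (mul_nonneg (hw i hi) (hw j hj))
  simp only [mul_add, Finset.sum_add_distrib, hswap fun i j => u i ⬝ᵥ A *ᵥ u j,
    hswap fun i j => u j ⬝ᵥ A *ᵥ u j] at hpair
  rw [hexpand, Finset.sum_mul_sum]
  simp only [← mul_assoc]
  linarith

end Matrix

namespace IsMoorePenroseInv

variable [Fintype V] {Q Qd : Matrix V V ℝ}

theorem isSymm (hQ : Q.IsSymm) (h : IsMoorePenroseInv Q Qd) : Qd.IsSymm := by
  obtain ⟨hQQdQ, hQdQQd, hQQd, hQdQ⟩ := h
  have hQdQ' : Qd * Q = Q * Qdᵀ := by rw [← hQdQ, transpose_mul, hQ.eq]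
  have hQQd' : Q * Qd = Qdᵀ * Q := by rw [← hQQd, transpose_mul, hQ.eq]
  have hQQdtQ : Q * Qdᵀ * Q = Q := by
    simpa only [transpose_mul, hQ.eq, Matrix.mul_assoc] using congrArg transpose hQQdQ
  have hcomm : Q * Qd = Qd * Q := by
    calc Q * Qd = (Q * Qdᵀ * Q) * Qd := by rw [hQQdtQ]
      _ = (Qd * Q) * (Q * Qd) := by rw [hQdQ']; noncomm_ring
      _ = Qd * (Q * Qdᵀ * Q) := by rw [hQQd']; noncomm_ring
      _ = Qd * Q := by rw [hQQdtQ]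
  show Qdᵀ = Qd
  calc Qdᵀ = (Qd * Q * Qd)ᵀ := by rw [hQdQQd]
    _ = Qdᵀ * Q * Qdᵀ := by rw [transpose_mul, transpose_mul, hQ.eq, Matrix.mul_assoc]
    _ = Qd * (Q * Qdᵀ) := by rw [← hQQd', hcomm, Matrix.mul_assoc]
    _ = Qd * Q * Qd := by rw [← hQdQ', Matrix.mul_assoc, hcomm]
    _ = Qd := hQdQQd

theorem posSemidef (hQ : Q.PosSemidef) (h : IsMoorePenroseInv Q Qd) : Qd.PosSemidef := by
  have hsymm : Qd.IsSymm := h.isSymm (isHermitian_iff_isSymm.1 hQ.1)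
  refine .of_dotProduct_mulVec_nonneg (isHermitian_iff_isSymm.2 hsymm) fun x => ?_
  have hform : x ⬝ᵥ Qd *ᵥ x = (Qd *ᵥ x) ⬝ᵥ Q *ᵥ (Qd *ᵥ x) := by
    conv_lhs => rw [← h.2.1]
    rw [← mulVec_mulVec, ← mulVec_mulVec, dotProduct_mulVec x Qd, ← mulVec_transpose, hsymm]
  simpa [hform] using hQ.dotProduct_mulVec_nonneg (Qd *ᵥ x)

theorem dotProduct_mulVec_mulVec (hQ : Q.IsSymm) (h : IsMoorePenroseInv Q Qd) (x : V → ℝ) :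
    (Q *ᵥ x) ⬝ᵥ Qd *ᵥ (Q *ᵥ x) = x ⬝ᵥ Q *ᵥ x := by
  have hvec : Q *ᵥ x = x ᵥ* Q := by rw [← mulVec_transpose, hQ.eq]
  calc (Q *ᵥ x) ⬝ᵥ Qd *ᵥ (Q *ᵥ x) = (x ᵥ* Q) ⬝ᵥ (Qd * Q) *ᵥ x := by rw [mulVec_mulVec, hvec]
    _ = x ⬝ᵥ (Q * Qd * Q) *ᵥ x := by rw [← dotProduct_mulVec, mulVec_mulVec, Matrix.mul_assoc]
    _ = x ⬝ᵥ Q *ᵥ x := by rw [h.1]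

end IsMoorePenroseInv

section Laplacian

open scoped Classical

variable [Fintype V] (G : SimpleGraph V) (c : V → V → ℝ)

theorem isSymm_lapMatrix (hsymm : ∀ i j, c i j = c j i) : (lapMatrix G c).IsSymm := by
  ext i j
  by_cases h : i = j
  · subst h; rfl
  · simp [lapMatrix, h, Ne.symm h, G.adj_comm, hsymm]

theorem lapMatrix_mulVec_apply (x : V → ℝ) (v : V) :
    (lapMatrix G c *ᵥ x) v = ∑ k, (if G.Adj v k then c v k else 0) * (x v - x k) := by
  have hrow : ∀ k, lapMatrix G c v k =
      (if v = k then ∑ j, if G.Adj v j then c v j else 0 else 0) -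
        if G.Adj v k then c v k else 0 := by
    intro k
    by_cases h : v = k
    · subst h; simp [lapMatrix]
    · simp only [lapMatrix, of_apply, h, if_false, zero_sub]; split_ifs <;> simp
  simp only [mulVec, dotProduct, hrow, sub_mul, ite_mul, zero_mul, Finset.sum_sub_distrib,
    Finset.sum_ite_eq, Finset.mem_univ, if_true, Finset.sum_mul, mul_sub]

theorem two_mul_dotProduct_lapMatrix_mulVec (hsymm : ∀ i j, c i j = c j i) (x : V → ℝ) :
    2 * (x ⬝ᵥ lapMatrix G c *ᵥ x) =
      ∑ v, ∑ k, (if G.Adj v k then c v k else 0) * (x v - x k) ^ 2 := by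
  have hform : x ⬝ᵥ lapMatrix G c *ᵥ x =
      ∑ v, ∑ k, (if G.Adj v k then c v k else 0) * ((x v - x k) * x v) := by
    simp only [dotProduct, lapMatrix_mulVec_apply, Finset.mul_sum]
    exact Finset.sum_congr rfl fun v _ => Finset.sum_congr rfl fun k _ => by ring
  have hswap : x ⬝ᵥ lapMatrix G c *ᵥ x =
      ∑ v, ∑ k, (if G.Adj v k then c v k else 0) * ((x k - x v) * x k) := by
    rw [hform, Finset.sum_comm]
    simp only [G.adj_comm, hsymm]
  rw [two_mul]
  nth_rw 1 [hform]
  rw [hswap, ← Finset.sum_add_distrib]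
  exact Finset.sum_congr rfl fun v _ => by rw [← Finset.sum_add_distrib]; congr! 1; ring

theorem posSemidef_lapMatrix (hsymm : ∀ i j, c i j = c j i)
    (hpos : ∀ i j, G.Adj i j → 0 < c i j) : (lapMatrix G c).PosSemidef := by
  refine .of_dotProduct_mulVec_nonneg (isHermitian_iff_isSymm.2 (isSymm_lapMatrix G c hsymm))
    fun x => ?_
  have hsum : 0 ≤ ∑ v, ∑ k, (if G.Adj v k then c v k else 0) * (x v - x k) ^ 2 := by
    refine Finset.sum_nonneg fun v _ => Finset.sum_nonneg fun k _ => ?_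
    split_ifs with h
    · exact mul_nonneg (hpos v k h).le (sq_nonneg _)
    · simp
  have := two_mul_dotProduct_lapMatrix_mulVec G c hsymm x
  rw [star_trivial]
  linarith

theorem lapMatrix_mulVec_indicator (hsymm : ∀ i j, c i j = c j i) (S : Finset V) :
    lapMatrix G c *ᵥ (S : Set V).indicator 1 =
      ∑ p ∈ G.interedges S Sᶜ, c p.1 p.2 • (Pi.single p.1 1 - Pi.single p.2 1) := by
  set f := (S : Set V).indicator (1 : V → ℝ)
  set a : V → V → ℝ := fun i j => if (i, j) ∈ G.interedges S Sᶜ then c i j else 0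
  -- `f i - f j = f i * (1 - f j) - f j * (1 - f i)` separates the links leaving and entering `S`.
  have ha : ∀ i j, (if G.Adj i j then c i j else 0) * (f i * (1 - f j)) = a i j := by
    intro i j
    by_cases hi : i ∈ S <;> by_cases hj : j ∈ S <;> simp [f, a, G.mk_mem_interedges_iff, hi, hj]
  ext v
  calc (lapMatrix G c *ᵥ f) v = ∑ k, a v k - ∑ k, a k v := by
        rw [lapMatrix_mulVec_apply, ← Finset.sum_sub_distrib]
        refine Finset.sum_congr rfl fun k _ => ?_
        rw [← ha, ← ha, G.adj_comm k v, hsymm k v]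
        ring
    _ = ∑ p : V × V, a p.1 p.2 * (Pi.single p.1 1 - Pi.single p.2 1 : V → ℝ) v := by
        simp [Fintype.sum_prod_type, mul_sub, Finset.sum_sub_distrib, Pi.single_apply]
    _ = _ := by
        simp [a, Finset.sum_apply]

end Laplacian

open scoped Classical in
theorem effRes_nonneg [Fintype V] {Qd : Matrix V V ℝ} (hQd : Qd.PosSemidef) (i j : V) :
    0 ≤ effRes Qd i j := by
  have h := hQd.dotProduct_mulVec_nonneg (Pi.single i 1 - Pi.single j 1)
  rwa [star_trivial] at h

theorem relResEdge_nonneg [Fintype V] {G : SimpleGraph V} {c : V → V → ℝ}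
    (hsymm : ∀ i j, c i j = c j i) (hpos : ∀ i j, G.Adj i j → 0 < c i j)
    {Qd : Matrix V V ℝ} (hQd : Qd.PosSemidef) {e : Sym2 V} (he : e ∈ G.edgeSet) :
    0 ≤ relResEdge c hsymm Qd e := by
  induction e using Sym2.ind with
  | h i j => exact mul_nonneg (hpos i j he).le (effRes_nonneg hQd i j)

open scoped Classical in
theorem one_le_sum_mul_effRes_interedges [Fintype V] {G : SimpleGraph V} {c : V → V → ℝ}
    (hsymm : ∀ i j, c i j = c j i) (hpos : ∀ i j, G.Adj i j → 0 < c i j)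
    {Qd : Matrix V V ℝ} (hQd : IsMoorePenroseInv (lapMatrix G c) Qd)
    {S : Finset V} (hS : (G.interedges S Sᶜ).Nonempty) :
    1 ≤ ∑ p ∈ G.interedges S Sᶜ, c p.1 p.2 * effRes Qd p.1 p.2 := by
  set T := G.interedges S Sᶜ
  set f := (S : Set V).indicator (1 : V → ℝ)
  set κ := ∑ p ∈ T, c p.1 p.2
  have hc : ∀ p ∈ T, 0 < c p.1 p.2 := fun p hp => hpos _ _ (G.mem_interedges_iff.1 hp).2.2
  have hκ : f ⬝ᵥ lapMatrix G c *ᵥ f = κ := by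
    rw [lapMatrix_mulVec_indicator G c hsymm, dotProduct_sum]
    refine Finset.sum_congr rfl fun p hp => ?_
    obtain ⟨hp₁, hp₂, -⟩ := G.mem_interedges_iff.1 hp
    simp [f, hp₁, Finset.mem_compl.1 hp₂]
  have hQd_nonneg : ∀ x, 0 ≤ x ⬝ᵥ Qd *ᵥ x := fun x => by
    simpa using (hQd.posSemidef (posSemidef_lapMatrix G c hsymm hpos)).dotProduct_mulVec_nonneg x
  have hκR : κ ≤ κ * ∑ p ∈ T, c p.1 p.2 * effRes Qd p.1 p.2 := calc
    κ = (lapMatrix G c *ᵥ f) ⬝ᵥ Qd *ᵥ (lapMatrix G c *ᵥ f) := by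
        rw [hQd.dotProduct_mulVec_mulVec (isSymm_lapMatrix G c hsymm), hκ]
    _ ≤ κ * ∑ p ∈ T, c p.1 p.2 * effRes Qd p.1 p.2 := by
        rw [lapMatrix_mulVec_indicator G c hsymm]
        exact sum_smul_dotProduct_mulVec_le hQd_nonneg T (fun p hp => (hc p hp).le) _
  exact le_of_mul_le_mul_left (by rwa [mul_one]) (Finset.sum_pos hc hS)

open scoped Classical in
theorem SimpleGraph.Connected.exists_interedges_subset_of_not_connected_deleteEdges [Fintype V]
    {G : SimpleGraph V} (hconn : G.Connected) {C : Set (Sym2 V)}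
    (hcut : ¬ (G.deleteEdges C).Connected) :
    ∃ S : Finset V, (G.interedges S Sᶜ).Nonempty ∧ ∀ p ∈ G.interedges S Sᶜ, s(p.1, p.2) ∈ C := by
  have : Nonempty V := hconn.nonempty
  obtain ⟨a, b, hab⟩ : ∃ a b, ¬ (G.deleteEdges C).Reachable a b := by
    simpa [SimpleGraph.connected_iff, SimpleGraph.Preconnected, this] using hcut
  set S : Finset V := {v | (G.deleteEdges C).Reachable a v}
  refine ⟨S, ?_, ?_⟩
  · obtain ⟨d, -, hd₁, hd₂⟩ :=
      (hconn.preconnected a b).some.exists_boundary_dart S (by simp [S]) (by simpa [S] using hab)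
    exact ⟨(d.fst, d.snd), G.mk_mem_interedges_iff.2 ⟨hd₁, by simpa using hd₂, d.adj⟩⟩
  · rintro ⟨i, j⟩ h
    obtain ⟨hi, hj, hij⟩ := G.mk_mem_interedges_iff.1 h
    by_contra hC
    simp only [S, Finset.mem_compl, Finset.mem_filter, Finset.mem_univ, true_and] at hi hj
    exact hj (hi.trans (SimpleGraph.Adj.reachable (by simpa [hij] using hC)))

theorem cut_relative_resistance_lower_bound_general
    [Fintype V] (G : SimpleGraph V)
    (c : V → V → ℝ) (hsymm : ∀ i j, c i j = c j i)
    (hpos : ∀ i j, G.Adj i j → 0 < c i j)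
    (hconn : G.Connected)
    (Qd : Matrix V V ℝ) (hQd : IsMoorePenroseInv (lapMatrix G c) Qd)
    (C : Finset (Sym2 V)) (hCE : ↑C ⊆ G.edgeSet)
    (hcut : ¬ (G.deleteEdges ↑C).Connected) :
    1 ≤ ∑ e ∈ C, relResEdge c hsymm Qd e := by
  classical
  obtain ⟨S, hS, hSC⟩ := hconn.exists_interedges_subset_of_not_connected_deleteEdges hcut
  have hinj : Set.InjOn (fun p : V × V => s(p.1, p.2)) (G.interedges S Sᶜ) := by
    rintro ⟨i, j⟩ hij ⟨k, l⟩ hkl h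
    obtain ⟨hi, -, -⟩ := G.mk_mem_interedges_iff.1 hij
    obtain ⟨-, hl, -⟩ := G.mk_mem_interedges_iff.1 hkl
    rcases Sym2.eq_iff.1 h with ⟨rfl, rfl⟩ | ⟨rfl, rfl⟩
    · rfl
    · exact absurd hi (Finset.mem_compl.1 hl)
  have hQd_psd := hQd.posSemidef (posSemidef_lapMatrix G c hsymm hpos)
  calc 1 ≤ ∑ p ∈ G.interedges S Sᶜ, c p.1 p.2 * effRes Qd p.1 p.2 :=
        one_le_sum_mul_effRes_interedges hsymm hpos hQd hS
    _ = ∑ e ∈ (G.interedges S Sᶜ).image (fun p => s(p.1, p.2)), relResEdge c hsymm Qd e :=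
        (Finset.sum_image (f := relResEdge c hsymm Qd) hinj).symm
    _ ≤ ∑ e ∈ C, relResEdge c hsymm Qd e :=
        Finset.sum_le_sum_of_subset_of_nonneg (Finset.image_subset_iff.2 hSC)
          fun e he _ => relResEdge_nonneg hsymm hpos hQd_psd (hCE he)

theorem cut_relative_resistance_lower_bound
    [Fintype V] [DecidableEq V] (G : SimpleGraph V) [DecidableRel G.Adj]
    (c : V → V → ℝ) (hsymm : ∀ i j, c i j = c j i)
    (hpos : ∀ i j, G.Adj i j → 0 < c i j)
    (hconn : G.Connected)
    (Qd : Matrix V V ℝ) (hQd : IsMoorePenroseInv (lapMatrix G c) Qd)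
    (C : Finset (Sym2 V)) (hCE : ↑C ⊆ G.edgeSet)
    (hcut : ¬ (G.deleteEdges ↑C).Connected) :
    1 ≤ ∑ e ∈ C, relResEdge c hsymm Qd e :=
  cut_relative_resistance_lower_bound_general G c hsymm hpos hconn Qd hQd C hCE hcut
end

section
/- For any weighted graph G, the sum of the node resistance curvatures over all nodes equals the number of connected components: Σ_{i∈V} p_i = β(G). -/
open Matrix

variable {V : Type*}

/- The node resistance curvature `p i = 1 - (1/2) ∑_{j ∼ i} c i j * ω i j`. -/
open Classical in
noncomputable def nodeCurv [Fintype V] (G : SimpleGraph V) (c : V → V → ℝ)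
    (Qd : Matrix V V ℝ) (i : V) : ℝ :=
  1 - 1 / 2 * ∑ j, if G.Adj i j then c i j * effRes Qd i j else 0

section aux

set_option linter.unusedSectionVars false

variable [Fintype V] [DecidableEq V] (G : SimpleGraph V) [DecidableRel G.Adj] (c : V → V → ℝ)

lemma lap_decomp (i j : V) : lapMatrix G c i j =
    (if i = j then (∑ k, if G.Adj i k then c i k else 0) else 0)
    + (if G.Adj i j then -c i j else 0) := by
  simp only [lapMatrix, of_apply]
  by_cases h : i = j
  · subst h; simp [G.irrefl]
    exact Finset.sum_congr rfl fun k _ => by congr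
  · simp [h]

lemma lap_symm (hsymm : ∀ i j, c i j = c j i) (i j : V) :
    lapMatrix G c i j = lapMatrix G c j i := by
  simp only [lapMatrix, of_apply]
  by_cases h : i = j
  · subst h; rfl
  · rw [if_neg h, if_neg (Ne.symm h), hsymm, G.adj_comm]

lemma lap_rowsum (i : V) : ∑ j, lapMatrix G c i j = 0 := by
  simp_rw [lap_decomp G c i, Finset.sum_add_distrib, Finset.sum_ite_eq, Finset.mem_univ,
    if_true]
  rw [← Finset.sum_add_distrib]
  simp [ite_add_ite]

lemma effRes_eq (Qd : Matrix V V ℝ) (i j : V) :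
    effRes Qd i j = Qd i i + Qd j j - Qd i j - Qd j i := by
  simp only [effRes, sub_dotProduct, dotProduct_sub, mulVec_sub, Pi.sub_apply,
    single_dotProduct, one_mul]
  simp only [mulVec, dotProduct, Pi.single_apply, mul_ite, mul_one, mul_zero,
    Finset.sum_ite_eq', Finset.mem_univ, if_true]
  ring

lemma key_sum (hsymm : ∀ i j, c i j = c j i) (Qd : Matrix V V ℝ) :
    ∑ i, ∑ j, (if G.Adj i j then c i j * effRes Qd i j else 0)
      = 2 * Matrix.trace (lapMatrix G c * Qd) := by
  have h1 : ∀ i j : V, (if G.Adj i j then c i j * effRes Qd i j else 0)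
      = (lapMatrix G c i j * Qd i j + lapMatrix G c i j * Qd j i)
        - lapMatrix G c i j * Qd i i - lapMatrix G c i j * Qd j j := by
    intro i j
    by_cases h : i = j
    · subst h; simp [G.irrefl]
    · rw [effRes_eq, lap_decomp G c, if_neg h, zero_add]
      split_ifs with hadj <;> ring
  simp_rw [h1, Finset.sum_sub_distrib, Finset.sum_add_distrib]
  have hrow : ∀ i : V, ∑ j, lapMatrix G c i j * Qd i i = 0 := by
    intro i; rw [← Finset.sum_mul, lap_rowsum, zero_mul]
  have hcol : ∀ j : V, ∑ i, lapMatrix G c i j * Qd j j = 0 := by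
    intro j
    rw [← Finset.sum_mul]
    rw [show (∑ i, lapMatrix G c i j) = ∑ i, lapMatrix G c j i from
      Finset.sum_congr rfl fun i _ => lap_symm G c hsymm i j, lap_rowsum, zero_mul]
  have t1 : ∑ i, ∑ j, lapMatrix G c i j * Qd j i = Matrix.trace (lapMatrix G c * Qd) := by
    simp [Matrix.trace, Matrix.mul_apply, Matrix.diag]
  have t2 : ∑ i, ∑ j, lapMatrix G c i j * Qd i j = Matrix.trace (lapMatrix G c * Qd) := by
    rw [Finset.sum_comm]
    simp_rw [fun j i => lap_symm G c hsymm i j]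
    simp [Matrix.trace, Matrix.mul_apply, Matrix.diag]
  rw [Finset.sum_comm (f := fun i j => lapMatrix G c i j * Qd j j)] at *
  simp_rw [hrow, hcol, t1, t2, Finset.sum_const_zero, sub_zero]
  ring

lemma lap_mulVec (x : V → ℝ) (i : V) :
    (lapMatrix G c *ᵥ x) i = ∑ j, if G.Adj i j then c i j * (x i - x j) else 0 := by
  simp only [mulVec, dotProduct]
  simp_rw [lap_decomp G c i, add_mul, Finset.sum_add_distrib, ite_mul, zero_mul,
    Finset.sum_ite_eq, Finset.mem_univ, if_true, Finset.sum_mul]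
  rw [← Finset.sum_add_distrib]
  refine Finset.sum_congr rfl fun j _ => ?_
  split_ifs <;> ring

lemma lap_quad (hsymm : ∀ i j, c i j = c j i) (x : V → ℝ) :
    x ⬝ᵥ (lapMatrix G c *ᵥ x)
      = (∑ i, ∑ j, if G.Adj i j then c i j * (x i - x j)^2 else 0) / 2 := by
  simp only [dotProduct, lap_mulVec G c x, Finset.mul_sum, mul_ite, mul_zero]
  have swap : (∑ i, ∑ j, if G.Adj i j then x i * (c i j * (x i - x j)) else 0)
      = ∑ i, ∑ j, if G.Adj i j then x j * (c i j * (x j - x i)) else 0 := by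
    rw [Finset.sum_comm]
    refine Finset.sum_congr rfl fun a _ => Finset.sum_congr rfl fun b _ => ?_
    by_cases h : G.Adj a b
    · rw [if_pos (G.adj_symm h), if_pos h, hsymm b a]
    · rw [if_neg (fun h' => h (G.adj_symm h')), if_neg h]
  rw [eq_div_iff (by norm_num : (2:ℝ) ≠ 0), mul_two]
  nth_rewrite 2 [swap]
  rw [← Finset.sum_add_distrib]
  refine Finset.sum_congr rfl fun a _ => ?_
  rw [← Finset.sum_add_distrib]
  refine Finset.sum_congr rfl fun b _ => ?_
  split_ifs <;> ring

lemma lap_mulVec_eq_zero_iff (hsymm : ∀ i j, c i j = c j i)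
    (hpos : ∀ i j, G.Adj i j → 0 < c i j) (x : V → ℝ) :
    lapMatrix G c *ᵥ x = 0 ↔ ∀ i j, G.Adj i j → x i = x j := by
  constructor
  · intro h
    have hq : x ⬝ᵥ (lapMatrix G c *ᵥ x) = 0 := by rw [h, dotProduct_zero]
    rw [lap_quad G c hsymm, div_eq_zero_iff] at hq
    have hq' := hq.resolve_right (by norm_num)
    have hterm : ∀ i j : V, (if G.Adj i j then c i j * (x i - x j)^2 else 0) = 0 := by
      have hnn : ∀ (i j : V), (0:ℝ) ≤ if G.Adj i j then c i j * (x i - x j)^2 else 0 := by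
        intro i j
        split_ifs with hju
        · exact mul_nonneg (hpos i j hju).le (sq_nonneg _)
        · exact le_rfl
      intro i j
      have houter := (Finset.sum_eq_zero_iff_of_nonneg
        (fun i _ => Finset.sum_nonneg fun j _ => hnn i j)).mp hq' i (Finset.mem_univ i)
      exact (Finset.sum_eq_zero_iff_of_nonneg (fun j _ => hnn i j)).mp houter j
        (Finset.mem_univ j)
    intro i j hadj
    have := hterm i j
    rw [if_pos hadj] at this
    rcases mul_eq_zero.mp this with h1 | h1
    · exact absurd h1 (hpos i j hadj).ne'
    · exact sub_eq_zero.mp (pow_eq_zero_iff (by norm_num) |>.mp h1)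
  · intro h
    ext i
    rw [lap_mulVec, Pi.zero_apply]
    refine Finset.sum_eq_zero fun j _ => ?_
    split_ifs with hj
    · rw [h i j hj, sub_self, mul_zero]
    · rfl

lemma lap_mulVec_eq_zero_iff_reachable (hsymm : ∀ i j, c i j = c j i)
    (hpos : ∀ i j, G.Adj i j → 0 < c i j) (x : V → ℝ) :
    lapMatrix G c *ᵥ x = 0 ↔ ∀ i j, G.Reachable i j → x i = x j := by
  rw [lap_mulVec_eq_zero_iff G c hsymm hpos]
  refine ⟨?_, fun h i j hA => h i j hA.reachable⟩
  intro h i j ⟨w⟩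
  induction w with
  | nil => rfl
  | cons hA _ h' => exact (h _ _ hA).trans h'

open Classical in
noncomputable def kerBasisAux (hsymm : ∀ i j, c i j = c j i)
    (hpos : ∀ i j, G.Adj i j → 0 < c i j) (comp : G.ConnectedComponent) :
    LinearMap.ker (Matrix.toLin' (lapMatrix G c)) :=
  ⟨fun i => if G.connectedComponentMk i = comp then (1:ℝ) else 0, by
    rw [LinearMap.mem_ker, Matrix.toLin'_apply,
      lap_mulVec_eq_zero_iff_reachable G c hsymm hpos]
    intro i j h
    split_ifs with h₁ h₂ h₃
    · rfl
    · rw [← SimpleGraph.ConnectedComponent.eq] at h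
      exact (h₂ (h₁ ▸ h.symm)).elim
    · rw [← SimpleGraph.ConnectedComponent.eq] at h
      exact (h₁ (h₃ ▸ h)).elim
    · rfl⟩

lemma finrank_ker_lap (hsymm : ∀ i j, c i j = c j i)
    (hpos : ∀ i j, G.Adj i j → 0 < c i j) :
    Module.finrank ℝ (LinearMap.ker (Matrix.toLin' (lapMatrix G c)))
      = Nat.card G.ConnectedComponent := by
  classical
  have hli : LinearIndependent ℝ (kerBasisAux G c hsymm hpos) := by
    rw [Fintype.linearIndependent_iff]
    intro g h0
    rw [Subtype.ext_iff] at h0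
    have h : ((∑ comp, g comp • kerBasisAux G c hsymm hpos comp : LinearMap.ker
        (Matrix.toLin' (lapMatrix G c))) : V → ℝ)
        = fun i => g (G.connectedComponentMk i) := by
      ext i
      simp [kerBasisAux, AddSubmonoid.coe_finset_sum, SetLike.mk_smul_mk, Finset.sum_apply,
        Pi.smul_apply, smul_eq_mul, mul_ite, mul_one, mul_zero,
        Finset.sum_ite_eq, Finset.mem_univ, if_true]
    rw [h] at h0
    intro comp
    obtain ⟨i, h'⟩ : ∃ i : V, G.connectedComponentMk i = comp := Quot.exists_rep comp
    exact h' ▸ congrFun h0 i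
  have hsp : ⊤ ≤ Submodule.span ℝ (Set.range (kerBasisAux G c hsymm hpos)) := by
    intro x _
    rw [Submodule.mem_span_range_iff_exists_fun]
    refine ⟨Quot.lift x.val ?_, ?_⟩
    · have hx : lapMatrix G c *ᵥ (x : V → ℝ) = 0 := by
        have := x.2
        rwa [LinearMap.mem_ker, Matrix.toLin'_apply] at this
      rw [lap_mulVec_eq_zero_iff_reachable G c hsymm hpos] at hx
      intro a b hab
      exact hx a b hab
    · ext j
      simp only [kerBasisAux]
      rw [AddSubmonoid.coe_finset_sum]
      simp only [SetLike.mk_smul_mk, Finset.sum_apply, Pi.smul_apply, smul_eq_mul, mul_ite,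
        mul_one, mul_zero, Finset.sum_ite_eq, Finset.mem_univ, if_true]
      rw [Finset.sum_eq_single (G.connectedComponentMk j) (fun b _ hb => by simp [Ne.symm hb])
        (by simp), if_pos rfl]
      rfl
  have b := Module.Basis.mk hli hsp
  rw [Module.finrank_eq_card_basis b, Nat.card_eq_fintype_card]

lemma trace_toLin' (P : Matrix V V ℝ) :
    LinearMap.trace ℝ (V → ℝ) (Matrix.toLin' P) = Matrix.trace P := by
  rw [LinearMap.trace_eq_matrix_trace ℝ (Pi.basisFun ℝ V), LinearMap.toMatrix_eq_toMatrix',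
    LinearMap.toMatrix'_toLin']

lemma trace_mul_pinv_eq_finrank_range (Q Qd : Matrix V V ℝ) (hQd : IsMoorePenroseInv Q Qd) :
    Matrix.trace (Q * Qd)
      = (Module.finrank ℝ (LinearMap.range (Matrix.toLin' Q)) : ℝ) := by
  have hidem : (Q * Qd) * (Q * Qd) = Q * Qd := by
    calc (Q * Qd) * (Q * Qd) = (Q * Qd * Q) * Qd := by
          simp only [Matrix.mul_assoc]
    _ = Q * Qd := by rw [hQd.1]
  have hproj : LinearMap.IsProj (LinearMap.range (Matrix.toLin' (Q * Qd)))
      (Matrix.toLin' (Q * Qd)) := by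
    constructor
    · intro x
      exact LinearMap.mem_range_self _ x
    · rintro x ⟨y, rfl⟩
      have : Matrix.toLin' (Q * Qd) ∘ₗ Matrix.toLin' (Q * Qd) = Matrix.toLin' (Q * Qd) := by
        rw [← Matrix.toLin'_mul, hidem]
      exact congrFun (congrArg (fun f => f.toFun) this) y
  have hrange : LinearMap.range (Matrix.toLin' (Q * Qd))
      = LinearMap.range (Matrix.toLin' Q) := by
    apply le_antisymm
    · rw [Matrix.toLin'_mul]
      exact LinearMap.range_comp_le_range _ _
    · have hq : Q = (Q * Qd) * Q := (hQd.1).symm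
      nth_rewrite 1 [hq]
      rw [Matrix.toLin'_mul]
      exact LinearMap.range_comp_le_range _ _
  rw [← trace_toLin', hproj.trace, hrange]

end aux

/- STATEMENT 6: the sum of the node resistance curvatures over all nodes equals
the number of connected components `β(G)`. -/
theorem sum_nodeCurv_eq_card_components
    [Fintype V] [DecidableEq V] (G : SimpleGraph V) [DecidableRel G.Adj]
    (c : V → V → ℝ) (hsymm : ∀ i j, c i j = c j i)
    (hpos : ∀ i j, G.Adj i j → 0 < c i j)
    (Qd : Matrix V V ℝ) (hQd : IsMoorePenroseInv (lapMatrix G c) Qd) :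
    ∑ i, nodeCurv G c Qd i = (Nat.card G.ConnectedComponent : ℝ) := by
  have hconv : ∑ i, nodeCurv G c Qd i
      = ∑ i, (1 - 1 / 2 * ∑ j, if G.Adj i j then c i j * effRes Qd i j else 0) := by
    refine Finset.sum_congr rfl fun i _ => ?_
    unfold nodeCurv
    congr 2
    exact Finset.sum_congr rfl fun j _ => by congr
  rw [hconv, Finset.sum_sub_distrib, ← Finset.mul_sum, key_sum G c hsymm Qd,
    Finset.sum_const, trace_mul_pinv_eq_finrank_range _ _ hQd]
  have h1 := LinearMap.finrank_range_add_finrank_ker (Matrix.toLin' (lapMatrix G c))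
  rw [Module.finrank_fintype_fun_eq_card, finrank_ker_lap G c hsymm hpos] at h1
  have h3 : (Module.finrank ℝ (LinearMap.range (Matrix.toLin' (lapMatrix G c))) : ℝ)
      + (Nat.card G.ConnectedComponent : ℝ) = (Fintype.card V : ℝ) := by
    exact_mod_cast congrArg (Nat.cast : ℕ → ℝ) h1
  simp only [nsmul_eq_mul, mul_one, Finset.card_univ]
  linarith
end
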